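/- arXiv:math/0601594 — 2 statements merged into one kernel-verified Lean document; each statement's English description precedes it below -/
import Mathlib

section
/- Let A be a singular masa in a II₁ factor N. Any partial isometry v ∈ N satisfying v A v* = A v v* with vv*, v*v ∈ A must lie in A; consequently, if e, f ∈ A are projections with ef = 0, then no nonzero partial isometry v ∈ N satisfies vv* ≤ e, v*v ≤ f, and v A v* = A v v*. -/
/-- A unitary element of a star ring. -/
def IsUnitaryElem {N : Type*} [Ring N] [StarRing N] (u : N) : Prop :=
  star u * u = 1 ∧ u * star u = 1

/-- Let `A` be a singular masa in a II₁ factor `N` (every unitary `w` with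
`w A w* = A` lies in `A`). Using the fact that any partial isometry `v` with
`v A v* = A v v*` and `v v*, v* v ∈ A` has the form `v = p u` with `p ∈ A` a projection
and `u` a normalizing unitary, we conclude: (1) every such partial isometry lies in `A`;
(2) if `e, f ∈ A` are projections with `e f = 0`, then no nonzero partial isometry `v`
satisfies `v v* ≤ e`, `v* v ≤ f` and `v A v* = A v v*`. -/
theorem stmt3 {N : Type*} [Ring N] [StarRing N] [Algebra ℂ N] [StarModule ℂ N]
    (A : StarSubalgebra ℂ N)
    (habelian : ∀ a ∈ A, ∀ b ∈ A, a * b = b * a)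
    (hsingular : ∀ w : N, IsUnitaryElem w →
      (fun a => w * a * star w) '' (A : Set N) = (A : Set N) → w ∈ A)
    (hfact : ∀ v : N, v * star v * v = v → v * star v ∈ A → star v * v ∈ A →
      (fun a => v * a * star v) '' (A : Set N) = {y | ∃ a ∈ A, y = a * (v * star v)} →
      ∃ p u : N, p ∈ A ∧ p * p = p ∧ star p = p ∧ IsUnitaryElem u ∧
        (fun a => u * a * star u) '' (A : Set N) = (A : Set N) ∧ v = p * u) :
    (∀ v : N, v * star v * v = v → v * star v ∈ A → star v * v ∈ A →
      (fun a => v * a * star v) '' (A : Set N) = {y | ∃ a ∈ A, y = a * (v * star v)} →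
      v ∈ A) ∧
    (∀ e f : N, e ∈ A → f ∈ A → e * e = e → star e = e → f * f = f → star f = f →
      e * f = 0 →
      ∀ v : N, v * star v * v = v → v * star v ∈ A → star v * v ∈ A →
        v * star v * e = v * star v → star v * v * f = star v * v →
        (fun a => v * a * star v) '' (A : Set N) = {y | ∃ a ∈ A, y = a * (v * star v)} →
        v = 0) := by

  have part1 : ∀ v : N, v * star v * v = v → v * star v ∈ A → star v * v ∈ A →
      (fun a => v * a * star v) '' (A : Set N) = {y | ∃ a ∈ A, y = a * (v * star v)} →
      v ∈ A := by
    intro v hv h1 h2 h3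
    obtain ⟨p, u, hpA, _, _, huU, huN, hvpu⟩ := hfact v hv h1 h2 h3
    have huA : u ∈ A := hsingular u huU huN
    rw [hvpu]
    exact mul_mem hpA huA
  refine ⟨part1, ?_⟩
  intro e f heA hfA hee hse hff hsf hef v hv h1 h2 hve hvf h3
  have hvA : v ∈ A := part1 v hv h1 h2 h3
  have hfe : f * e = 0 := by
    have := congrArg star hef
    rwa [star_mul, hse, hsf, star_zero] at this
  have hcve : e * v = v * e := habelian e heA v hvA
  have hv1 : v = v * e := by
    calc v = v * star v * v := hv.symm
    _ = v * star v * e * v := by rw [hve]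
    _ = v * star v * (e * v) := by rw [mul_assoc]
    _ = v * star v * (v * e) := by rw [hcve]
    _ = v * star v * v * e := by noncomm_ring
    _ = v * e := by rw [hv]
  have hv2 : v = v * f := by
    calc v = v * star v * v := hv.symm
    _ = v * (star v * v) := by rw [mul_assoc]
    _ = v * (star v * v * f) := by rw [hvf]
    _ = v * star v * v * f := by noncomm_ring
    _ = v * f := by rw [hv]
  calc v = v * e := hv1
  _ = v * f * e := by rw [← hv2]
  _ = v * (f * e) := by rw [mul_assoc]
  _ = 0 := by rw [hfe, mul_zero]
end

section
/- Let A be a masa in a II₁ factor N, B ⊆ A a von Neumann subalgebra, and M a von Neumann subalgebra of N containing B. Suppose that for every x ∈ M, E_A(x) lies in the ‖·‖₂-closed convex hull of {u x u* : u unitary in B}. Then E_{B'∩M}(x) = E_A(x) for all x ∈ M; in particular B' ∩ M ⊆ A, and if additionally E_A(M) ⊆ B then B' ∩ M = B, i.e., B is a masa in M. -/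
/-- The set of conjugates `u x u*` of `x` by unitaries `u` of a subalgebra `Q`. -/
def conjOrbit {N : Type*} [Ring N] [StarRing N] (Q : Set N) (x : N) : Set N :=
  {z | ∃ u ∈ Q, IsUnitaryElem u ∧ z = u * x * star u}

/-- Membership in the `‖·‖₂`-closure of the convex hull of a set. -/
def mem2Closure {N : Type*} [Ring N] [Algebra ℂ N] (n₂ : N → ℝ) (S : Set N) (y : N) :
    Prop :=
  ∀ ε > (0:ℝ), ∃ z ∈ convexHull ℝ S, n₂ (y - z) < ε

/-- Let `A` be a masa in a II₁ factor `N`, `B ⊆ A` a von Neumann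
subalgebra, and `M` a von Neumann subalgebra of `N` containing `B`. `E_A x` is the
minimal `‖·‖₂`-norm element of the `‖·‖₂`-closed convex hull of the `A`-unitary
conjugates of `x`, and `F = E_{B' ∩ M}` likewise for `B`-unitary conjugates (unique
minimizer, fixing `B' ∩ M`). If for every `x ∈ M`, `E_A x` lies in the `‖·‖₂`-closed
convex hull of `{u x u* : u unitary in B}`, then `F x = E_A x` for all `x ∈ M`; in
particular `B' ∩ M ⊆ A`, and if additionally `E_A (M) ⊆ B` then `B' ∩ M = B`, i.e. `B`
is a masa in `M`. -/
theorem stmt12 {N : Type*} [Ring N] [StarRing N] [Algebra ℂ N] [StarModule ℂ N]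
    (A B M : StarSubalgebra ℂ N) (hBA : B ≤ A) (hBM : B ≤ M)
    (habB : ∀ a ∈ B, ∀ b ∈ B, a * b = b * a)
    (n₂ : N → ℝ) (hnn : ∀ z : N, 0 ≤ n₂ z) (hfaith : ∀ z : N, n₂ z = 0 → z = 0)
    (EA F : N →ₗ[ℂ] N)
    (hEAmem : ∀ x : N, EA x ∈ A)
    (hEAcl : ∀ x : N, mem2Closure n₂ (conjOrbit (A : Set N) x) (EA x))
    (hEAmin : ∀ x y : N, mem2Closure n₂ (conjOrbit (A : Set N) x) y → n₂ (EA x) ≤ n₂ y)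
    (hFmemM : ∀ x ∈ M, F x ∈ M)
    (hFcomm : ∀ x : N, ∀ b ∈ B, F x * b = b * F x)
    (hFfix : ∀ x ∈ M, (∀ b ∈ B, x * b = b * x) → F x = x)
    (hFcl : ∀ x : N, mem2Closure n₂ (conjOrbit (B : Set N) x) (F x))
    (hFmin : ∀ x y : N, mem2Closure n₂ (conjOrbit (B : Set N) x) y → n₂ (F x) ≤ n₂ y)
    (hFuniq : ∀ x y : N, mem2Closure n₂ (conjOrbit (B : Set N) x) y →
      (∀ z : N, mem2Closure n₂ (conjOrbit (B : Set N) x) z → n₂ y ≤ n₂ z) → y = F x)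
    (hyp : ∀ x ∈ M, mem2Closure n₂ (conjOrbit (B : Set N) x) (EA x)) :
    (∀ x ∈ M, F x = EA x) ∧
    (∀ x ∈ M, (∀ b ∈ B, x * b = b * x) → x ∈ A) ∧
    ((∀ x ∈ M, EA x ∈ B) → ∀ x ∈ M, ((∀ b ∈ B, x * b = b * x) ↔ x ∈ B)) := by
  -- B-orbit closures sit inside A-orbit closures
  have hmono : ∀ x y : N, mem2Closure n₂ (conjOrbit (B : Set N) x) y →
      mem2Closure n₂ (conjOrbit (A : Set N) x) y := by
    intro x y h ε hε
    obtain ⟨z, hz, hzε⟩ := h ε hε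
    exact ⟨z, convexHull_mono (fun w hw => by obtain ⟨u, hu, huu, hw'⟩ := hw; exact ⟨u, hBA hu, huu, hw'⟩) hz, hzε⟩
  have key : ∀ x ∈ M, F x = EA x := by
    intro x hx
    exact (hFuniq x (EA x) (hyp x hx)
      (fun z hz => hEAmin x z (hmono x z hz))).symm
  refine ⟨key, ?_, ?_⟩
  · intro x hx hcomm
    have : x = EA x := (hFfix x hx hcomm).symm.trans (key x hx)
    exact this ▸ hEAmem x
  · intro hB x hx
    constructor
    · intro hcomm
      have : x = EA x := (hFfix x hx hcomm).symm.trans (key x hx)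
      exact this ▸ hB x hx
    · intro hxB b hb
      exact habB x hxB b hb
end
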